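/- arXiv:2505.10007 — 9 statements merged into one kernel-verified Lean document; each statement's English description precedes it below -/
import Mathlib

section
/- For every integer-free real parameter k ≥ 2 and all t in [0,1], the function f_k(t) = (t^k - k·t + k - 1)/(k(k-1)) satisfies f_k(t) ≥ (t-1)²/k. -/
/-- For real `k ≥ 2` and `t ∈ [0,1]`,
`f_k(t) = (t^k - k·t + k - 1)/(k(k-1)) ≥ (t-1)²/k`. -/
theorem stmt_1 (k : ℝ) (hk : 2 ≤ k) (t : ℝ) (ht : t ∈ Set.Icc (0:ℝ) 1) :
    (t ^ k - k * t + k - 1) / (k * (k - 1)) ≥ (t - 1) ^ 2 / k := by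
  obtain ⟨ht0, ht1⟩ := ht
  have hkpos : (0:ℝ) < k := by linarith
  have hk1 : (0:ℝ) < k - 1 := by linarith
  rw [ge_iff_le, div_le_div_iff₀ hkpos (by positivity)]
  have key : (t - 1) ^ 2 * (k - 1) ≤ t ^ k - k * t + k - 1 := by
    rcases eq_or_lt_of_le ht0 with h0 | h0
    · rw [← h0, Real.zero_rpow (by positivity)]
      nlinarith
    · have hb : 1 + (k - 1) * (t - 1) ≤ t ^ (k - 1) := by
        have := one_add_mul_self_le_rpow_one_add (s := t - 1) (by linarith)
          (p := k - 1) (by linarith)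
        simpa using this
      have hsplit : t ^ (k - 1) * t = t ^ k := by
        rw [← Real.rpow_add_one h0.ne']; norm_num
      rw [← hsplit]
      nlinarith [mul_le_mul_of_nonneg_right hb (le_of_lt h0)]
  nlinarith
end

section
/- For every k in the open interval (1,2) and all t in [0,1), the function f_k(t) = (t^k - k·t + k - 1)/(k(k-1)) satisfies f_k(t) ≥ (t-1)²/2. -/
/-! With `g(t) = t^k - k t + k - 1 - k(k-1)(1-t)²/2` we have `g(1) = 0` and
`g'(t) = k (t^(k-1) - 1 - (k-1)(t-1)) ≤ 0` on `[0, ∞)`, since `t ↦ t^(k-1)` is concave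
for `0 ≤ k - 1 ≤ 1` (Bernoulli's inequality). Hence `g` is antitone and `g(t) ≥ g(1) = 0`
for `t ∈ [0, 1]`. -/

open Set

lemma rpow_le_one_add_mul_sub_one {x p : ℝ} (hx : 0 ≤ x) (hp₀ : 0 ≤ p) (hp₁ : p ≤ 1) :
    x ^ p ≤ 1 + p * (x - 1) := by
  simpa using rpow_one_add_le_one_add_mul_self (s := x - 1) (by linarith) hp₀ hp₁

lemma hasDerivAt_rpow_sub_mul_sub_sq {k : ℝ} (hk : 1 ≤ k) (x : ℝ) :
    HasDerivAt (fun x : ℝ => x ^ k - k * x + k - 1 - k * (k - 1) * (1 - x) ^ 2 / 2)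
      (k * (x ^ (k - 1) - 1 - (k - 1) * (x - 1))) x := by
  have hpow : HasDerivAt (fun x : ℝ => x ^ k) (k * x ^ (k - 1)) x := by
    simpa [mul_comm] using Real.hasDerivAt_rpow_const (x := x) (Or.inr hk)
  have hsq : HasDerivAt (fun x : ℝ => (1 - x) ^ 2) (2 * (1 - x) * (-1)) x := by
    simpa using ((hasDerivAt_id x).const_sub 1).fun_pow 2
  refine ((((hpow.fun_sub ((hasDerivAt_id' x).const_mul k)).add_const k).sub_const 1).fun_sub
    ((hsq.const_mul (k * (k - 1))).div_const 2)).congr_deriv ?_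
  ring

lemma antitoneOn_rpow_sub_mul_sub_sq {k : ℝ} (hk₁ : 1 ≤ k) (hk₂ : k ≤ 2) :
    AntitoneOn (fun x : ℝ => x ^ k - k * x + k - 1 - k * (k - 1) * (1 - x) ^ 2 / 2) (Ici 0) := by
  refine antitoneOn_of_hasDerivWithinAt_nonpos (convex_Ici 0)
    (fun x _ => (hasDerivAt_rpow_sub_mul_sub_sq hk₁ x).continuousAt.continuousWithinAt)
    (fun x _ => (hasDerivAt_rpow_sub_mul_sub_sq hk₁ x).hasDerivWithinAt) fun x hx => ?_
  rw [interior_Ici] at hx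
  have := rpow_le_one_add_mul_sub_one (le_of_lt hx) (sub_nonneg.2 hk₁) (by linarith : k - 1 ≤ 1)
  exact mul_nonpos_of_nonneg_of_nonpos (by linarith) (by linarith)

lemma mul_sq_div_two_le_rpow_sub_mul {k t : ℝ} (hk₁ : 1 ≤ k) (hk₂ : k ≤ 2) (ht₀ : 0 ≤ t)
    (ht₁ : t ≤ 1) : k * (k - 1) * (1 - t) ^ 2 / 2 ≤ t ^ k - k * t + k - 1 := by
  have := antitoneOn_rpow_sub_mul_sub_sq hk₁ hk₂ (mem_Ici.2 ht₀) (mem_Ici.2 zero_le_one) ht₁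
  simp only [Real.one_rpow] at this
  linarith

/-- For `k ∈ (1,2)` and `t ∈ [0,1)`,
`f_k(t) = (t^k - k·t + k - 1)/(k(k-1)) ≥ (t-1)²/2`. -/
theorem stmt_2 (k : ℝ) (hk : k ∈ Set.Ioo (1:ℝ) 2) (t : ℝ) (ht : t ∈ Set.Ico (0:ℝ) 1) :
    (t ^ k - k * t + k - 1) / (k * (k - 1)) ≥ (t - 1) ^ 2 / 2 := by
  obtain ⟨hk₁, hk₂⟩ := hk
  have hpos : 0 < k * (k - 1) := mul_pos (by linarith) (sub_pos.2 hk₁)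
  have key := mul_sq_div_two_le_rpow_sub_mul hk₁.le hk₂.le ht.1 ht.2.le
  rw [ge_iff_le, le_div_iff₀ hpos]
  linarith [sq_nonneg (t - 1), show (1 - t) ^ 2 = (t - 1) ^ 2 by ring]
end

section
/- Let p be a probability distribution on a finite set S, let q be a probability distribution with D_KL(q||p) ≤ δ, and suppose δ ≤ p_min/(8m²) where m ≥ 1 is an integer and p_min = min{p(s) : p(s) > 0}. Then for every s with p(s) > 0, q(s) ≥ (1 - 1/(2m))·p(s). -/
/-!
Each summand of `∑ q log (q / p)`, corrected by `p - q` (which sums to zero), equals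
`p · klFun (q / p)` with `klFun x = x log x + 1 - x ≥ 0`, so a single summand is at most `δ`.
On `[0, 1]`, `klFun x ≥ (1 - x)² / 2` (compare derivatives, using `log x ≤ x - 1`); hence
`p(s) (1 - q(s)/p(s))² / 2 ≤ δ ≤ p(s) / (8 m²)`, which gives `1 - q(s)/p(s) ≤ 1 / (2m)`.
-/

open Real Finset InformationTheory

lemma sq_one_sub_div_two_le_klFun {x : ℝ} (hx₀ : 0 ≤ x) (hx₁ : x ≤ 1) :
    (1 - x) ^ 2 / 2 ≤ klFun x := by
  set g : ℝ → ℝ := fun x => klFun x - (1 - x) ^ 2 / 2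
  have hg_deriv {y : ℝ} (hy : y ∈ Set.Ioo 0 1) : HasDerivAt g (log y + (1 - y)) y := by
    have hsq : HasDerivAt (fun x : ℝ => (1 - x) ^ 2 / 2) (-(1 - y)) y :=
      ((((hasDerivAt_id' y).const_sub 1).fun_pow 2).div_const 2).congr_deriv
        (by push_cast; ring)
    exact ((hasDerivAt_klFun hy.1.ne').sub hsq).congr_deriv (sub_neg_eq_add _ _)
  have hg_anti : AntitoneOn g (Set.Icc 0 1) := by
    apply antitoneOn_of_deriv_nonpos (convex_Icc 0 1)
    · exact (continuous_klFun.sub (by fun_prop)).continuousOn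
    · rw [interior_Icc]
      exact fun y hy => (hg_deriv hy).differentiableAt.differentiableWithinAt
    · rw [interior_Icc]
      intro y hy
      rw [(hg_deriv hy).deriv]
      linarith [log_le_sub_one_of_pos hy.1]
  have := hg_anti ⟨hx₀, hx₁⟩ ⟨zero_le_one, le_rfl⟩ hx₁
  simp only [g, klFun_one] at this
  linarith

lemma one_sub_le_of_klFun_le {x ε : ℝ} (hx : 0 ≤ x) (hε : 0 ≤ ε) (h : klFun x ≤ ε ^ 2 / 2) :
    1 - ε ≤ x := by
  rcases le_total 1 x with h1 | h1
  · linarith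
  have hsq : (1 - x) ^ 2 ≤ ε ^ 2 := by linarith [sq_one_sub_div_two_le_klFun hx h1]
  linarith [pow_le_pow_iff_left₀ (by linarith) hε two_ne_zero |>.mp hsq]

lemma mul_log_div_sub_add_eq_mul_klFun {p : ℝ} (q : ℝ) (hp : p ≠ 0) :
    q * log (q / p) - q + p = p * klFun (q / p) := by
  rw [klFun_apply]
  field_simp
  ring

lemma sum_mul_log_div_eq_sum_mul_klFun {ι : Type*} (s : Finset ι) (p q : ι → ℝ)
    (hsum : ∑ i ∈ s, q i = ∑ i ∈ s, p i) (hac : ∀ i ∈ s, p i = 0 → q i = 0) :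
    ∑ i ∈ s, q i * log (q i / p i) = ∑ i ∈ s, p i * klFun (q i / p i) := by
  calc ∑ i ∈ s, q i * log (q i / p i)
      = ∑ i ∈ s, (q i * log (q i / p i) - q i + p i) := by
        rw [sum_add_distrib, sum_sub_distrib, hsum, sub_add_cancel]
    _ = ∑ i ∈ s, p i * klFun (q i / p i) := by
        refine sum_congr rfl fun i hi => ?_
        by_cases hpi : p i = 0
        · simp [hpi, hac i hi hpi]
        · exact mul_log_div_sub_add_eq_mul_klFun (q i) hpi

theorem stmt_4_general {S : Type*} [Fintype S] (p q : S → ℝ) (pmin δ : ℝ) (m : ℕ)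
    (hp0 : ∀ s, 0 ≤ p s) (hp1 : ∑ s, p s = 1)
    (hq0 : ∀ s, 0 ≤ q s) (hq1 : ∑ s, q s = 1)
    (hac : ∀ s, p s = 0 → q s = 0)
    (hpmin : IsLeast {x : ℝ | ∃ s, 0 < p s ∧ p s = x} pmin)
    (hKL : ∑ s, q s * Real.log (q s / p s) ≤ δ)
    (hδ : δ ≤ pmin / (8 * (m : ℝ) ^ 2)) :
    ∀ s, 0 < p s → q s ≥ (1 - 1 / (2 * (m : ℝ))) * p s := by
  intro s hps
  have hx : 0 ≤ q s / p s := div_nonneg (hq0 s) hps.le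
  have hterm : p s * klFun (q s / p s) ≤ p s * (1 / (8 * (m : ℝ) ^ 2)) :=
    calc p s * klFun (q s / p s)
        ≤ ∑ t, p t * klFun (q t / p t) :=
          single_le_sum (fun t _ => mul_nonneg (hp0 t)
            (klFun_nonneg (div_nonneg (hq0 t) (hp0 t)))) (mem_univ s)
      _ = ∑ t, q t * log (q t / p t) :=
          (sum_mul_log_div_eq_sum_mul_klFun _ p q (hq1.trans hp1.symm) fun t _ => hac t).symm
      _ ≤ pmin / (8 * (m : ℝ) ^ 2) := hKL.trans hδ
      _ ≤ p s * (1 / (8 * (m : ℝ) ^ 2)) := by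
          rw [mul_one_div]
          gcongr
          exact hpmin.2 ⟨s, hps, rfl⟩
  have hkl : klFun (q s / p s) ≤ (1 / (2 * (m : ℝ))) ^ 2 / 2 := by
    have hε : (1 / (2 * (m : ℝ))) ^ 2 / 2 = 1 / (8 * (m : ℝ) ^ 2) := by ring
    exact hε ▸ le_of_mul_le_mul_left hterm hps
  have := one_sub_le_of_klFun_le hx (by positivity) hkl
  rwa [le_div_iff₀ hps] at this

/-- If `D_KL(q‖p) ≤ δ ≤ p_min/(8 m²)` then `q(s) ≥ (1 - 1/(2m)) p(s)` on the support of `p`. -/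
theorem stmt_4 {S : Type*} [Fintype S] (p q : S → ℝ) (pmin δ : ℝ) (m : ℕ)
    (hp0 : ∀ s, 0 ≤ p s) (hp1 : ∑ s, p s = 1)
    (hq0 : ∀ s, 0 ≤ q s) (hq1 : ∑ s, q s = 1)
    (hac : ∀ s, p s = 0 → q s = 0)
    (hpmin : IsLeast {x : ℝ | ∃ s, 0 < p s ∧ p s = x} pmin)
    (hm : 1 ≤ m)
    (hKL : ∑ s, q s * Real.log (q s / p s) ≤ δ)
    (hδ : δ ≤ pmin / (8 * (m : ℝ) ^ 2)) :
    ∀ s, 0 < p s → q s ≥ (1 - 1 / (2 * (m : ℝ))) * p s :=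
  stmt_4_general p q pmin δ m hp0 hp1 hq0 hq1 hac hpmin hKL hδ
end

section
/- Let p be a probability distribution on a finite set S, let k ∈ (1,∞), and let q be a probability distribution with D_{f_k}(q||p) ≤ δ where δ ≤ p_min/(max{8,4k}·m²) for an integer m ≥ 1 and p_min = min{p(s) : p(s) > 0}. Then for every s with p(s) > 0, q(s) ≥ (1 - 1/(2m))·p(s). -/
/-!
Only the term of `s` in the divergence matters: all terms are nonnegative, so
`f_k(t) p(s) ≤ δ ≤ p(s) / (4 max{2,k} m²)` for `t = q(s)/p(s)`. On `[0, 1]` the generator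
satisfies `(1 - t)² ≤ max{2,k} f_k(t)`, whence `(1 - t)² ≤ 1/(2m)²`.
-/

open Finset

/-- The generator `f_k` of the power divergence `D_{f_k}`. -/
noncomputable def powerDivergenceFun (k t : ℝ) : ℝ :=
  (t ^ k - k * t + k - 1) / (k * (k - 1))

section PowerDivergenceFun

variable {k t : ℝ}

lemma powerDivergenceFun_nonneg (hk : 1 < k) (ht : 0 ≤ t) : 0 ≤ powerDivergenceFun k t := by
  have bernoulli := one_add_mul_self_le_rpow_one_add (s := t - 1) (by linarith) hk.le
  rw [add_sub_cancel] at bernoulli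
  exact div_nonneg (by linarith) (mul_nonneg (by linarith) (by linarith))

lemma sq_one_sub_le_mul_powerDivergenceFun_of_two_le (hk : 2 ≤ k) (ht : 0 ≤ t) :
    (1 - t) ^ 2 ≤ k * powerDivergenceFun k t := by
  have hk1 : 0 < k - 1 := by linarith
  rw [powerDivergenceFun, mul_div_assoc', le_div_iff₀ (by positivity)]
  rcases ht.eq_or_lt with rfl | ht
  · rw [Real.zero_rpow (by positivity)]
    nlinarith
  -- weighted AM-GM between `t ^ k` and `t`, with weights chosen so that the mean is `t ^ 2`
  have amgm := Real.geom_mean_le_arith_mean2_weighted (w₁ := 1 / (k - 1))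
    (w₂ := (k - 2) / (k - 1)) (p₁ := t ^ k) (p₂ := t) (by positivity)
    (div_nonneg (by linarith) hk1.le) (Real.rpow_nonneg ht.le k) ht.le (by field_simp; ring)
  have hmean : (t ^ k) ^ (1 / (k - 1)) * t ^ ((k - 2) / (k - 1)) = t ^ 2 := by
    rw [← Real.rpow_natCast t 2, ← Real.rpow_mul ht.le, ← Real.rpow_add ht]
    congr 1
    field_simp
    push_cast
    ring
  rw [hmean] at amgm
  have h : t ^ 2 * (k - 1) ≤ t ^ k + (k - 2) * t := by
    calc t ^ 2 * (k - 1) ≤ (1 / (k - 1) * t ^ k + (k - 2) / (k - 1) * t) * (k - 1) :=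
          mul_le_mul_of_nonneg_right amgm hk1.le
      _ = t ^ k + (k - 2) * t := by field_simp
  nlinarith

lemma antitoneOn_rpow_sub_quadratic (hk : 1 < k) (hk2 : k ≤ 2) :
    AntitoneOn (fun x : ℝ => x ^ k - k * x + (k - 1) - k * (k - 1) / 2 * (1 - x) ^ 2)
      (Set.Icc 0 1) := by
  refine antitoneOn_of_hasDerivWithinAt_nonpos (convex_Icc 0 1)
    (f' := fun x => k * x ^ (k - 1) - k + k * (k - 1) * (1 - x)) ?_ ?_ ?_
  · have : ContinuousOn (fun x : ℝ => x ^ k) (Set.Icc 0 1) :=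
      fun x _ => (Real.continuousAt_rpow_const x k (Or.inr (by linarith))).continuousWithinAt
    fun_prop
  · intro x hx
    rw [interior_Icc] at hx
    have hpow : HasDerivAt (fun y : ℝ => y ^ k) (k * x ^ (k - 1)) x :=
      Real.hasDerivAt_rpow_const (Or.inl hx.1.ne')
    have hsq := ((hasDerivAt_id' x).const_sub 1).fun_pow 2
    exact ((((hpow.sub ((hasDerivAt_id' x).const_mul k)).add_const (k - 1)).sub
      (hsq.const_mul (k * (k - 1) / 2))).congr_deriv (by push_cast; ring)).hasDerivWithinAt
  · intro x hx
    rw [interior_Icc] at hx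
    -- Bernoulli's inequality for the concave power `x ^ (k - 1)`
    have bernoulli := rpow_one_add_le_one_add_mul_self (s := x - 1) (by linarith [hx.1])
      (p := k - 1) (by linarith) (by linarith)
    rw [add_sub_cancel] at bernoulli
    nlinarith

lemma sq_one_sub_le_two_mul_powerDivergenceFun_of_le_two (hk : 1 < k) (hk2 : k ≤ 2)
    (ht0 : 0 ≤ t) (ht1 : t ≤ 1) : (1 - t) ^ 2 ≤ 2 * powerDivergenceFun k t := by
  have h := antitoneOn_rpow_sub_quadratic hk hk2 ⟨ht0, ht1⟩ ⟨zero_le_one, le_rfl⟩ ht1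
  simp only [Real.one_rpow] at h
  rw [powerDivergenceFun, mul_div_assoc', le_div_iff₀ (by nlinarith)]
  linarith

lemma sq_one_sub_le_max_mul_powerDivergenceFun (hk : 1 < k) (ht0 : 0 ≤ t) (ht1 : t ≤ 1) :
    (1 - t) ^ 2 ≤ max 2 k * powerDivergenceFun k t := by
  rcases le_total k 2 with hk2 | hk2
  · rw [max_eq_left hk2]
    exact sq_one_sub_le_two_mul_powerDivergenceFun_of_le_two hk hk2 ht0 ht1
  · rw [max_eq_right hk2]
    exact sq_one_sub_le_mul_powerDivergenceFun_of_two_le hk2 ht0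

lemma one_sub_inv_le_of_powerDivergenceFun_le {m : ℝ} (hk : 1 < k) (ht : 0 ≤ t) (hm : 0 ≤ m)
    (h : powerDivergenceFun k t ≤ 1 / (max 8 (4 * k) * m ^ 2)) : 1 - 1 / (2 * m) ≤ t := by
  have hinv : 0 ≤ 1 / (2 * m) := by positivity
  rcases le_total 1 t with ht1 | ht1
  · linarith
  have hc : 0 < max 2 k := lt_max_of_lt_left two_pos
  have hmax : max 8 (4 * k) = 4 * max 2 k := by
    rw [mul_max_of_nonneg _ _ (by norm_num : (0 : ℝ) ≤ 4)]
    norm_num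
  have hsq : (1 - t) ^ 2 ≤ (1 / (2 * m)) ^ 2 :=
    calc (1 - t) ^ 2 ≤ max 2 k * powerDivergenceFun k t :=
          sq_one_sub_le_max_mul_powerDivergenceFun hk ht ht1
      _ ≤ max 2 k * ((max 2 k)⁻¹ * (1 / (2 * m)) ^ 2) := by
          gcongr
          rw [hmax] at h
          exact h.trans_eq (by ring)
      _ = (1 / (2 * m)) ^ 2 := mul_inv_cancel_left₀ hc.ne' _
  linarith [(pow_le_pow_iff_left₀ (by linarith) hinv two_ne_zero).mp hsq]

end PowerDivergenceFun

theorem stmt_5_general {S : Type*} [Fintype S] (p q : S → ℝ) (k pmin δ : ℝ) (m : ℕ)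
    (hp0 : ∀ s, 0 ≤ p s)
    (hq0 : ∀ s, 0 ≤ q s)
    (hk : 1 < k)
    (hpmin : IsLeast {x : ℝ | ∃ s, 0 < p s ∧ p s = x} pmin)
    (hfk : ∑ s, ((q s / p s) ^ k - k * (q s / p s) + k - 1) / (k * (k - 1)) * p s ≤ δ)
    (hδ : δ ≤ pmin / (max 8 (4 * k) * (m : ℝ) ^ 2)) :
    ∀ s, 0 < p s → q s ≥ (1 - 1 / (2 * (m : ℝ))) * p s := by
  intro s hs
  have hratio (u : S) : 0 ≤ q u / p u := div_nonneg (hq0 u) (hp0 u)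
  have hterm : powerDivergenceFun k (q s / p s) * p s ≤ δ :=
    (single_le_sum (fun u _ => mul_nonneg (powerDivergenceFun_nonneg hk (hratio u)) (hp0 u))
      (mem_univ s)).trans hfk
  have hbound : powerDivergenceFun k (q s / p s) * p s ≤ 1 / (max 8 (4 * k) * m ^ 2) * p s :=
    calc _ ≤ pmin / (max 8 (4 * k) * m ^ 2) := hterm.trans hδ
      _ ≤ p s / (max 8 (4 * k) * m ^ 2) := by gcongr; exact hpmin.2 ⟨s, hs, rfl⟩
      _ = 1 / (max 8 (4 * k) * m ^ 2) * p s := by ring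
  have hlow := one_sub_inv_le_of_powerDivergenceFun_le hk (hratio s) m.cast_nonneg
    (le_of_mul_le_mul_right hbound hs)
  calc (1 - 1 / (2 * (m : ℝ))) * p s ≤ q s / p s * p s := by gcongr
    _ = q s := div_mul_cancel₀ _ hs.ne'

/-- If `D_{f_k}(q‖p) ≤ δ ≤ p_min/(max{8,4k} m²)` then `q(s) ≥ (1 - 1/(2m)) p(s)`
on the support of `p`, where `f_k(t) = (t^k - kt + k - 1)/(k(k-1))`. -/
theorem stmt_5 {S : Type*} [Fintype S] (p q : S → ℝ) (k pmin δ : ℝ) (m : ℕ)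
    (hp0 : ∀ s, 0 ≤ p s) (hp1 : ∑ s, p s = 1)
    (hq0 : ∀ s, 0 ≤ q s) (hq1 : ∑ s, q s = 1)
    (hk : 1 < k)
    (hpmin : IsLeast {x : ℝ | ∃ s, 0 < p s ∧ p s = x} pmin)
    (hm : 1 ≤ m)
    (hfk : ∑ s, ((q s / p s) ^ k - k * (q s / p s) + k - 1) / (k * (k - 1)) * p s ≤ δ)
    (hδ : δ ≤ pmin / (max 8 (4 * k) * (m : ℝ) ^ 2)) :
    ∀ s, 0 < p s → q s ≥ (1 - 1 / (2 * (m : ℝ))) * p s :=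
  stmt_5_general p q k pmin δ m hp0 hq0 hk hpmin hfk hδ
end

section
/- Let S be a finite set, p a probability measure on S, and Δ a signed measure on S with Δ(S) = 0 and Δ absolutely continuous with respect to p. Then for any V : S → ℝ and any j ∈ (0,1], sup_{α>0} α^j · |⟨Δ, e^{-V/α}⟩| / ⟨p, e^{-V/α}⟩ ≤ (3/2)^j · (span V)^j · ||Δ/p||_{L^∞(p)}, where span V = max V - min V over the support of p and ⟨μ, f⟩ = Σ_s μ(s) f(s). -/
private lemma aux_rpow_key (α x j : ℝ) (hα : 0 < α) (hx : 0 ≤ x)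
    (hj0 : 0 < j) (hj1 : j ≤ 1) :
    α ^ j * (1 - Real.exp (-x / α)) ≤ x ^ j := by
  rcases le_or_gt x α with h | h
  · rcases eq_or_lt_of_le hx with h0 | h0
    · rw [← h0]
      simp [Real.rpow_eq_zero_iff_of_nonneg, hj0.ne', Real.exp_zero]
    · have ht0 : 0 < x / α := div_pos h0 hα
      have ht1 : x / α ≤ 1 := (div_le_one hα).2 h
      have h1 : 1 - Real.exp (-x / α) ≤ x / α := by
        have := Real.add_one_le_exp (-x / α)
        have hxa : -x / α = -(x / α) := by ring
        rw [hxa] at this ⊢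
        linarith
      have h2 : x / α ≤ (x / α) ^ j := by
        have := Real.rpow_le_rpow_of_exponent_ge ht0 ht1 hj1
        rwa [Real.rpow_one] at this
      have h3 : α ^ j * (x / α) ^ j = x ^ j := by
        rw [← Real.mul_rpow hα.le ht0.le]
        congr 1
        field_simp
      calc α ^ j * (1 - Real.exp (-x / α)) ≤ α ^ j * (x / α) := by
            apply mul_le_mul_of_nonneg_left h1 (Real.rpow_nonneg hα.le j)
        _ ≤ α ^ j * (x / α) ^ j :=
            mul_le_mul_of_nonneg_left h2 (Real.rpow_nonneg hα.le j)
        _ = x ^ j := h3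
  · have h1 : 1 - Real.exp (-x / α) ≤ 1 := by
      have := Real.exp_pos (-x / α); linarith
    calc α ^ j * (1 - Real.exp (-x / α)) ≤ α ^ j * 1 :=
          mul_le_mul_of_nonneg_left h1 (Real.rpow_nonneg hα.le j)
      _ = α ^ j := mul_one _
      _ ≤ x ^ j := Real.rpow_le_rpow hα.le h.le hj0.le

/-- For a signed measure `Δ` with total mass zero, absolutely continuous w.r.t. a
probability measure `p`, and `j ∈ (0,1]`:
`sup_{α>0} α^j·|⟨Δ, e^{-V/α}⟩|/⟨p, e^{-V/α}⟩ ≤ (3/2)^j·(span V)^j·‖Δ/p‖_{L^∞(p)}`. -/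
theorem stmt_10 {S : Type*} [Fintype S] (p Δ V : S → ℝ) (j : ℝ)
    (hp0 : ∀ s, 0 ≤ p s) (hp1 : ∑ s, p s = 1)
    (hΔsum : ∑ s, Δ s = 0) (hΔac : ∀ s, p s = 0 → Δ s = 0)
    (hj : j ∈ Set.Ioc (0:ℝ) 1) :
    ∀ α : ℝ, 0 < α →
      α ^ j * |∑ s, Δ s * Real.exp (-(V s) / α)| / (∑ s, p s * Real.exp (-(V s) / α)) ≤
        (3/2) ^ j * (sSup (V '' {s | 0 < p s}) - sInf (V '' {s | 0 < p s})) ^ j *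
          sSup ((fun s => |Δ s / p s|) '' {s | 0 < p s}) := by
  intro α hα
  obtain ⟨hj0, hj1⟩ := hj
  set A : Set S := {s | 0 < p s} with hA
  have hAne : A.Nonempty := by
    by_contra h
    rw [Set.not_nonempty_iff_eq_empty] at h
    have : ∀ s, p s = 0 := by
      intro s
      by_contra hps
      have : s ∈ A := lt_of_le_of_ne (hp0 s) (Ne.symm hps)
      rw [h] at this; exact this
    simp [this] at hp1
  have hfinV : (V '' A).Finite := (Set.toFinite A).image V
  have hVne : (V '' A).Nonempty := hAne.image V
  set M := sSup (V '' A) with hM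
  set m := sInf (V '' A) with hm
  have hle : ∀ s ∈ A, V s ≤ M := fun s hs => le_csSup hfinV.bddAbove ⟨s, hs, rfl⟩
  have hge : ∀ s ∈ A, m ≤ V s := fun s hs => csInf_le hfinV.bddBelow ⟨s, hs, rfl⟩
  have hmM : m ≤ M := by
    obtain ⟨x, ⟨s0, hs0, rfl⟩⟩ := hVne
    exact le_trans (csInf_le hfinV.bddBelow ⟨s0, hs0, rfl⟩)
      (le_csSup hfinV.bddAbove ⟨s0, hs0, rfl⟩)
  set C := sSup ((fun s => |Δ s / p s|) '' A) with hC
  have hfinC : ((fun s => |Δ s / p s|) '' A).Finite := (Set.toFinite A).image _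
  have hCne : ((fun s => |Δ s / p s|) '' A).Nonempty := hAne.image _
  have hCge : ∀ s ∈ A, |Δ s / p s| ≤ C := fun s hs => le_csSup hfinC.bddAbove ⟨s, hs, rfl⟩
  have hC0 : 0 ≤ C := by
    obtain ⟨s0, hs0⟩ := hAne
    exact le_trans (abs_nonneg _) (hCge s0 hs0)
  -- numerator and denominator
  set f : S → ℝ := fun s => Real.exp (-(V s) / α) with hf
  set D := ∑ s, p s * f s with hD
  set c := Real.exp (-M / α) with hc
  have hDpos : 0 < D := by
    obtain ⟨s0, hs0⟩ := hAne
    apply Finset.sum_pos' (fun s _ => mul_nonneg (hp0 s) (Real.exp_pos _).le)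
    exact ⟨s0, Finset.mem_univ s0, mul_pos hs0 (Real.exp_pos _)⟩
  have hΔbd : ∀ s, |Δ s| ≤ C * p s ∨ Δ s = 0 := by
    intro s
    by_cases hs : 0 < p s
    · left
      have := hCge s hs
      calc |Δ s| = |Δ s / p s| * p s := by
            rw [abs_div, abs_of_pos hs]; field_simp
        _ ≤ C * p s := mul_le_mul_of_nonneg_right this hs.le
    · right
      exact hΔac s (le_antisymm (not_lt.1 hs) (hp0 s))
  -- shift: ∑ Δ s * f s = ∑ Δ s * (f s - c)
  have hshift : ∑ s, Δ s * f s = ∑ s, Δ s * (f s - c) := by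
    rw [Finset.sum_congr rfl (fun s _ => by ring : ∀ s ∈ Finset.univ,
      Δ s * (f s - c) = Δ s * f s - Δ s * c)] at *
    rw [Finset.sum_sub_distrib, ← Finset.sum_mul, hΔsum, zero_mul, sub_zero]
  have hterm : ∀ s, |Δ s * (f s - c)| ≤ C * (p s * (f s - c)) := by
    intro s
    by_cases hs : 0 < p s
    · have hfc : 0 ≤ f s - c := by
        have : -M / α ≤ -(V s) / α := by
          apply div_le_div_of_nonneg_right _ hα.le
          · linarith [hle s hs]
        have := Real.exp_le_exp.2 this
        simp only [hf, hc]
        linarith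
      rw [abs_mul, abs_of_nonneg hfc, ← mul_assoc]
      apply mul_le_mul_of_nonneg_right _ hfc
      have := hCge s hs
      calc |Δ s| = |Δ s / p s| * p s := by
            rw [abs_div, abs_of_pos hs]; field_simp
        _ ≤ C * p s := mul_le_mul_of_nonneg_right this hs.le
    · have hps : p s = 0 := le_antisymm (not_lt.1 hs) (hp0 s)
      have hΔs : Δ s = 0 := hΔac s hps
      simp [hΔs, hps]
  have hnum : |∑ s, Δ s * f s| ≤ C * (D - c) := by
    rw [hshift]
    calc |∑ s, Δ s * (f s - c)| ≤ ∑ s, |Δ s * (f s - c)| :=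
          Finset.abs_sum_le_sum_abs _ _
      _ ≤ ∑ s, C * (p s * (f s - c)) := Finset.sum_le_sum (fun s _ => hterm s)
      _ = C * (D - c) := by
          rw [← Finset.mul_sum]
          congr 1
          rw [Finset.sum_congr rfl (fun s _ => by ring : ∀ s ∈ Finset.univ,
            p s * (f s - c) = p s * f s - p s * c)]
          rw [Finset.sum_sub_distrib, ← Finset.sum_mul, hp1, one_mul]
  have hDle : D ≤ Real.exp (-m / α) := by
    have : ∀ s ∈ Finset.univ, p s * f s ≤ p s * Real.exp (-m / α) := by
      intro s _
      by_cases hs : 0 < p s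
      · apply mul_le_mul_of_nonneg_left _ (hp0 s)
        apply Real.exp_le_exp.2
        apply div_le_div_of_nonneg_right _ hα.le
        linarith [hge s hs]
      · have hps : p s = 0 := le_antisymm (not_lt.1 hs) (hp0 s)
        simp [hps]
    calc D ≤ ∑ s, p s * Real.exp (-m / α) := Finset.sum_le_sum this
      _ = Real.exp (-m / α) := by rw [← Finset.sum_mul, hp1, one_mul]
  -- key chain
  have hcD : Real.exp (-(M - m) / α) ≤ c / D := by
    have h1 : c / Real.exp (-m / α) ≤ c / D :=
      div_le_div_of_nonneg_left (Real.exp_pos _).le hDpos hDle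
    have h2 : c / Real.exp (-m / α) = Real.exp (-(M - m) / α) := by
      rw [hc, ← Real.exp_sub]
      congr 1
      ring
    linarith
  have hratio : (D - c) / D ≤ 1 - Real.exp (-(M - m) / α) := by
    have hcpos : 0 < c := Real.exp_pos _
    have : (D - c) / D = 1 - c / D := by field_simp
    rw [this]
    linarith
  have hDc0 : 0 ≤ D - c := by
    have hterm2 : ∀ s ∈ Finset.univ, p s * c ≤ p s * f s := by
      intro s _
      by_cases hs : 0 < p s
      · apply mul_le_mul_of_nonneg_left _ (hp0 s)
        apply Real.exp_le_exp.2
        apply div_le_div_of_nonneg_right _ hα.le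
        linarith [hle s hs]
      · have hps : p s = 0 := le_antisymm (not_lt.1 hs) (hp0 s)
        simp [hps]
    have : ∑ s, p s * c ≤ D := Finset.sum_le_sum hterm2
    rw [← Finset.sum_mul, hp1, one_mul] at this
    linarith
  have hkey : α ^ j * (1 - Real.exp (-(M - m) / α)) ≤ (M - m) ^ j :=
    aux_rpow_key α (M - m) j hα (by linarith) hj0 hj1
  have hαj : 0 ≤ α ^ j := Real.rpow_nonneg hα.le j
  -- assemble
  rw [div_le_iff₀ hDpos]
  have step1 : α ^ j * |∑ s, Δ s * f s| ≤ α ^ j * (C * (D - c)) :=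
    mul_le_mul_of_nonneg_left hnum hαj
  have step2 : α ^ j * (C * (D - c)) ≤ C * (M - m) ^ j * D := by
    have h1 : D - c ≤ (1 - Real.exp (-(M - m) / α)) * D := by
      have := hratio
      rw [div_le_iff₀ hDpos] at this
      linarith
    have h2 : α ^ j * (C * (D - c)) ≤ α ^ j * (C * ((1 - Real.exp (-(M - m) / α)) * D)) := by
      apply mul_le_mul_of_nonneg_left _ hαj
      exact mul_le_mul_of_nonneg_left h1 hC0
    have h3 : α ^ j * (C * ((1 - Real.exp (-(M - m) / α)) * D)) =
        C * (α ^ j * (1 - Real.exp (-(M - m) / α))) * D := by ring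
    have h4 : C * (α ^ j * (1 - Real.exp (-(M - m) / α))) * D ≤ C * (M - m) ^ j * D := by
      apply mul_le_mul_of_nonneg_right _ hDpos.le
      exact mul_le_mul_of_nonneg_left hkey hC0
    linarith
  have h32 : (1:ℝ) ≤ (3/2) ^ j := by
    have := Real.rpow_le_rpow (by norm_num : (0:ℝ) ≤ 1) (by norm_num : (1:ℝ) ≤ 3/2) hj0.le
    rwa [Real.one_rpow] at this
  have hMm : 0 ≤ (M - m) ^ j := Real.rpow_nonneg (by linarith) j
  have step3 : C * (M - m) ^ j * D ≤ (3/2) ^ j * (M - m) ^ j * C * D := by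
    apply mul_le_mul_of_nonneg_right _ hDpos.le
    have := mul_le_mul_of_nonneg_right h32 (mul_nonneg hMm hC0)
    nlinarith [this]
  calc α ^ j * |∑ s, Δ s * f s| ≤ α ^ j * (C * (D - c)) := step1
    _ ≤ C * (M - m) ^ j * D := step2
    _ ≤ (3/2) ^ j * (M - m) ^ j * C * D := step3
    _ = (3/2) ^ j * (M - m) ^ j * C * D := rfl
end

section
/- Let p be a probability measure on a finite set S, k* > 1, c > 0, and V : S → ℝ. Define f(α) = α - c·⟨p, (α - V)₊^{k*}⟩^{1/k*} for α ∈ ℝ. Then f(α) = α for all α ≤ ess inf_p V, and if α* maximizes f over ℝ with α* > ess inf_p V, then c = ⟨p, (α* - V)₊^{k*}⟩^{1 - 1/k*} / ⟨p, (α* - V)₊^{k*-1}⟩, and the measure p*(s) = p(s)(α* - V(s))₊^{k*-1} / ⟨p, (α* - V)₊^{k*-1}⟩ satisfies ⟨p*, V⟩ = f(α*). -/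
/-!
For `α ≤ ess inf_p V` every term of `⟨p, (α - V)₊^{k*}⟩` vanishes, so `f α = α`. Beyond the
essential infimum this moment is positive, and since `t ↦ t₊^{k*}` is differentiable with
derivative `k* t₊^{k*-1}`, `f` is differentiable at `α*` with
`f'(α*) = 1 - c ⟨p, (α* - V)₊^{k*-1}⟩ ⟨p, (α* - V)₊^{k*}⟩^{1/k* - 1}`; `f'(α*) = 0` gives `c`.
The identity `t₊^{k*-1} · t = t₊^{k*}` then turns `⟨p*, V⟩` into
`α* - ⟨p, (α* - V)₊^{k*}⟩ / ⟨p, (α* - V)₊^{k*-1}⟩`, which is `f(α*)` by the formula for `c`.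
-/

open Real Finset Filter

lemma hasDerivAt_max_zero_rpow {k : ℝ} (hk : 1 < k) (y : ℝ) :
    HasDerivAt (fun x : ℝ => max x 0 ^ k) (k * max y 0 ^ (k - 1)) y := by
  have hk₁ : k - 1 ≠ 0 := sub_ne_zero.2 hk.ne'
  rcases lt_trichotomy y 0 with hy | rfl | hy
  · rw [max_eq_right hy.le, zero_rpow hk₁, mul_zero]
    refine (hasDerivAt_const y (0 : ℝ)).congr_of_eventuallyEq ?_
    filter_upwards [Iio_mem_nhds hy] with x hx
    rw [max_eq_right (Set.mem_Iio.1 hx).le, zero_rpow (by positivity)]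
  · have hleft : HasDerivWithinAt (fun x : ℝ => max x 0 ^ k) (k * max 0 0 ^ (k - 1))
        (Set.Iic 0) 0 := by
      rw [max_self, zero_rpow hk₁, mul_zero]
      exact (hasDerivWithinAt_const 0 _ (0 : ℝ)).congr_of_mem
        (fun x hx => by rw [max_eq_right hx, zero_rpow (by positivity)]) (Set.mem_Iic.2 le_rfl)
    have hright : HasDerivWithinAt (fun x : ℝ => max x 0 ^ k) (k * max 0 0 ^ (k - 1))
        (Set.Ici 0) 0 := by
      rw [max_self]
      exact (hasDerivAt_rpow_const (Or.inr hk.le)).hasDerivWithinAt.congr_of_mem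
        (fun x hx => by rw [max_eq_left hx]) (Set.mem_Ici.2 le_rfl)
    simpa only [Set.Iic_union_Ici, hasDerivWithinAt_univ] using hleft.union hright
  · rw [max_eq_left hy.le]
    refine (hasDerivAt_rpow_const (Or.inl hy.ne')).congr_of_eventuallyEq ?_
    filter_upwards [Ioi_mem_nhds hy] with x hx
    rw [max_eq_left (Set.mem_Ioi.1 hx).le]

lemma max_zero_rpow_sub_one_mul_self {k : ℝ} (hk₀ : k ≠ 0) (hk₁ : k ≠ 1) (x : ℝ) :
    max x 0 ^ (k - 1) * x = max x 0 ^ k := by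
  rcases le_or_gt x 0 with hx | hx
  · rw [max_eq_right hx, zero_rpow (sub_ne_zero.2 hk₁), zero_rpow hk₀, zero_mul]
  · rw [max_eq_left hx.le, ← rpow_add_one hx.ne', sub_add_cancel]

section
variable {S : Type*} [Fintype S]

lemma exists_essInf_mem {p : S → ℝ} (hp : 0 < ∑ s, p s) (V : S → ℝ) :
    ∃ s₀, 0 < p s₀ ∧ V s₀ = sInf (V '' {s | 0 < p s}) := by
  obtain ⟨s, -, hs⟩ := exists_lt_of_sum_lt (by simpa using hp : ∑ _ : S, (0 : ℝ) < ∑ s, p s)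
  exact Set.Nonempty.csInf_mem (Set.image_nonempty.2 ⟨s, hs⟩) ((Set.toFinite _).image V)

/-- `⟨p, (α - V)₊ ^ k⟩`. -/
noncomputable def posPartMoment (p V : S → ℝ) (k α : ℝ) : ℝ := ∑ s, p s * max (α - V s) 0 ^ k

namespace posPartMoment

variable {p V : S → ℝ} {k α : ℝ}

lemma eq_zero_of_le_sInf (hp : ∀ s, 0 ≤ p s) (hk : k ≠ 0)
    (hα : α ≤ sInf (V '' {s | 0 < p s})) : posPartMoment p V k α = 0 := by
  refine sum_eq_zero fun s _ => ?_
  rcases (hp s).eq_or_lt with hs | hs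
  · rw [← hs, zero_mul]
  · have : α ≤ V s := hα.trans (csInf_le (Set.toFinite _).bddBelow ⟨s, hs, rfl⟩)
    rw [max_eq_right (sub_nonpos.2 this), zero_rpow hk, mul_zero]

lemma pos (hp : ∀ s, 0 ≤ p s) {s₀ : S} (hs₀ : 0 < p s₀) (hα : V s₀ < α) :
    0 < posPartMoment p V k α :=
  sum_pos' (fun s _ => mul_nonneg (hp s) (rpow_nonneg (le_max_right _ _) _))
    ⟨s₀, mem_univ _, mul_pos hs₀ (rpow_pos_of_pos (lt_max_of_lt_left (sub_pos.2 hα)) _)⟩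

lemma hasDerivAt (hk : 1 < k) (α : ℝ) :
    HasDerivAt (posPartMoment p V k) (k * posPartMoment p V (k - 1) α) α := by
  have hterm : ∀ s ∈ univ, HasDerivAt (fun β => p s * max (β - V s) 0 ^ k)
      (p s * (k * max (α - V s) 0 ^ (k - 1))) α := fun s _ => by
    simpa using ((hasDerivAt_max_zero_rpow hk (α - V s)).comp α
      ((hasDerivAt_id α).sub_const (V s))).const_mul (p s)
  have hderiv :
      k * posPartMoment p V (k - 1) α = ∑ s, p s * (k * max (α - V s) 0 ^ (k - 1)) := by
    rw [posPartMoment, mul_sum]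
    exact sum_congr rfl fun s _ => by ring
  rw [hderiv]
  exact HasDerivAt.fun_sum hterm

lemma sum_mul_eq (hk₀ : k ≠ 0) (hk₁ : k ≠ 1) :
    ∑ s, p s * max (α - V s) 0 ^ (k - 1) * V s =
      α * posPartMoment p V (k - 1) α - posPartMoment p V k α := by
  simp only [posPartMoment, mul_sum, ← sum_sub_distrib]
  refine sum_congr rfl fun s _ => ?_
  linear_combination (-p s) * max_zero_rpow_sub_one_mul_self hk₀ hk₁ (α - V s)

lemma sum_div_mul_eq (hk₀ : k ≠ 0) (hk₁ : k ≠ 1) (hM : posPartMoment p V (k - 1) α ≠ 0) :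
    ∑ s, p s * max (α - V s) 0 ^ (k - 1) / posPartMoment p V (k - 1) α * V s =
      α - posPartMoment p V k α / posPartMoment p V (k - 1) α := by
  simp_rw [div_mul_eq_mul_div, ← sum_div, sum_mul_eq hk₀ hk₁]
  field_simp

lemma mul_eq_rpow_of_isLocalMax (hk : 1 < k) {c : ℝ}
    (hmax : IsLocalMax (fun β => β - c * posPartMoment p V k β ^ (1 / k)) α)
    (hM : 0 < posPartMoment p V k α) :
    c * posPartMoment p V (k - 1) α = posPartMoment p V k α ^ (1 - 1 / k) := by
  have hderiv := (hasDerivAt_id α).sub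
    (((hasDerivAt hk α).rpow_const (p := 1 / k) (Or.inl hM.ne')).const_mul c)
  have hcrit : c * posPartMoment p V (k - 1) α * posPartMoment p V k α ^ (1 / k - 1) = 1 := by
    have h := hmax.hasDerivAt_eq_zero hderiv
    rw [show k * posPartMoment p V (k - 1) α * (1 / k) = posPartMoment p V (k - 1) α by
      field_simp] at h
    linear_combination -h
  have hinv : posPartMoment p V k α ^ (1 / k - 1) * posPartMoment p V k α ^ (1 - 1 / k) = 1 := by
    rw [← rpow_add hM]
    norm_num
  calc c * posPartMoment p V (k - 1) α
      = c * posPartMoment p V (k - 1) α * posPartMoment p V k α ^ (1 / k - 1) *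
          posPartMoment p V k α ^ (1 - 1 / k) := by rw [mul_assoc _ (_ ^ _), hinv, mul_one]
    _ = posPartMoment p V k α ^ (1 - 1 / k) := by rw [hcrit, one_mul]

end posPartMoment
end

theorem stmt_12_general {S : Type*} [Fintype S] (p V : S → ℝ) (kstar c : ℝ)
    (hp0 : ∀ s, 0 ≤ p s) (hp1 : ∑ s, p s = 1)
    (hk : 1 < kstar)
    (f : ℝ → ℝ)
    (hf : f = fun α => α - c * (∑ s, p s * (max (α - V s) 0) ^ kstar) ^ (1 / kstar)) :
    (∀ α : ℝ, α ≤ sInf (V '' {s | 0 < p s}) → f α = α) ∧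
    (∀ αstar : ℝ, (∀ α : ℝ, f α ≤ f αstar) → sInf (V '' {s | 0 < p s}) < αstar →
      c = (∑ s, p s * (max (αstar - V s) 0) ^ kstar) ^ (1 - 1 / kstar) /
            (∑ s, p s * (max (αstar - V s) 0) ^ (kstar - 1)) ∧
      (∑ s, p s * (max (αstar - V s) 0) ^ (kstar - 1) /
          (∑ s', p s' * (max (αstar - V s') 0) ^ (kstar - 1)) * V s) = f αstar) := by
  subst hf
  have hk₀ : kstar ≠ 0 := by positivity
  obtain ⟨s₀, hs₀, hVs₀⟩ := exists_essInf_mem (hp1 ▸ one_pos) V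
  refine ⟨fun α hα => ?_, fun α hmax hα => ?_⟩
  · change α - c * posPartMoment p V kstar α ^ (1 / kstar) = α
    rw [posPartMoment.eq_zero_of_le_sInf hp0 hk₀ hα, zero_rpow (by positivity), mul_zero, sub_zero]
  · have hM := posPartMoment.pos (k := kstar) hp0 hs₀ (hVs₀ ▸ hα)
    have hM' := posPartMoment.pos (k := kstar - 1) hp0 hs₀ (hVs₀ ▸ hα)
    have hc : c = posPartMoment p V kstar α ^ (1 - 1 / kstar) / posPartMoment p V (kstar - 1) α :=
      eq_div_of_mul_eq hM'.ne' <|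
        posPartMoment.mul_eq_rpow_of_isLocalMax hk (Eventually.of_forall hmax) hM
    refine ⟨hc, (posPartMoment.sum_div_mul_eq hk₀ hk.ne' hM'.ne').trans ?_⟩
    change _ = α - c * posPartMoment p V kstar α ^ (1 / kstar)
    rw [hc, div_mul_eq_mul_div, ← rpow_add hM]
    norm_num

/-- First-order characterization of the optimizer in the `f_k`-divergence dual
functional `f(α) = α - c·⟨p, (α-V)₊^{k*}⟩^{1/k*}`: `f(α) = α` for
`α ≤ ess inf_p V`, and at an interior maximizer `α*` the constant `c` and the
worst-case measure `p*` satisfy the stated identities. -/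
theorem stmt_12 {S : Type*} [Fintype S] (p V : S → ℝ) (kstar c : ℝ)
    (hp0 : ∀ s, 0 ≤ p s) (hp1 : ∑ s, p s = 1)
    (hk : 1 < kstar) (hc : 0 < c)
    (f : ℝ → ℝ)
    (hf : f = fun α => α - c * (∑ s, p s * (max (α - V s) 0) ^ kstar) ^ (1 / kstar)) :
    (∀ α : ℝ, α ≤ sInf (V '' {s | 0 < p s}) → f α = α) ∧
    (∀ αstar : ℝ, (∀ α : ℝ, f α ≤ f αstar) → sInf (V '' {s | 0 < p s}) < αstar →
      c = (∑ s, p s * (max (αstar - V s) 0) ^ kstar) ^ (1 - 1 / kstar) /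
            (∑ s, p s * (max (αstar - V s) 0) ^ (kstar - 1)) ∧
      (∑ s, p s * (max (αstar - V s) 0) ^ (kstar - 1) /
          (∑ s', p s' * (max (αstar - V s') 0) ^ (kstar - 1)) * V s) = f αstar) :=
  stmt_12_general p V kstar c hp0 hp1 hk f hf
end

section
/- Let p be a probability measure on a finite set S, Δ a signed measure with Δ(S) = 0, k* > 1, and V : S → ℝ with V ≥ 0 and ||V||_{L^∞(p)} = span of V over supp p (i.e., min over supp p is 0). Then sup over α ≥ ||V||_{L^∞(p)} of (1/k*)·|⟨Δ, (α - V)^{k*}⟩| / ⟨p, (α - V)^{k*-1}⟩ is at most 2·||Δ/p||_{L^∞(p)} · ||V||_{L^∞(p)}. -/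
/-!
Since `Δ` has mass zero, the constant `(α - M) ^ k*` (with `M = ‖V‖_{L^∞(p)}`) may be subtracted
from the integrand. By the mean value theorem each shifted term is at most `k* · M · (α - V) ^ (k* - 1)`,
and `|Δ| ≤ ‖Δ/p‖_{L^∞(p)} · p`, so the numerator is at most `k* · ‖Δ/p‖ · M` times the denominator.
-/

open Real Set Finset

/-- Mean value theorem for `t ↦ t ^ k`, whose derivative `k * t ^ (k - 1)` is monotone on `[y, x]`. -/
lemma rpow_sub_rpow_le_mul_rpow_mul_sub {x y k : ℝ} (hy : 0 ≤ y) (hyx : y ≤ x) (hk : 1 ≤ k) :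
    x ^ k - y ^ k ≤ k * x ^ (k - 1) * (x - y) := by
  have hderiv : ∀ t ∈ Icc y x,
      HasDerivWithinAt (fun t : ℝ => t ^ k) (k * t ^ (k - 1)) (Icc y x) t :=
    fun t _ => (hasDerivAt_rpow_const (Or.inr hk)).hasDerivWithinAt
  have hbound : ∀ t ∈ Ico y x, ‖k * t ^ (k - 1)‖ ≤ k * x ^ (k - 1) := by
    intro t ht
    have ht0 : 0 ≤ t := hy.trans ht.1
    rw [norm_eq_abs, abs_of_nonneg (by positivity)]
    exact mul_le_mul_of_nonneg_left (rpow_le_rpow ht0 ht.2.le (by linarith)) (by linarith)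
  have hmvt := norm_image_sub_le_of_norm_deriv_le_segment' hderiv hbound x (right_mem_Icc.2 hyx)
  exact (le_abs_self _).trans hmvt

lemma abs_rpow_sub_rpow_sub_le {a v M k : ℝ} (hv : 0 ≤ v) (hvM : v ≤ M) (hMa : M ≤ a)
    (hk : 1 ≤ k) : |(a - v) ^ k - (a - M) ^ k| ≤ k * M * (a - v) ^ (k - 1) := by
  have hy : 0 ≤ a - M := sub_nonneg.2 hMa
  have hyx : a - M ≤ a - v := by linarith
  rw [abs_of_nonneg (sub_nonneg.2 (rpow_le_rpow hy hyx (by linarith)))]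
  calc (a - v) ^ k - (a - M) ^ k ≤ k * (a - v) ^ (k - 1) * (a - v - (a - M)) :=
        rpow_sub_rpow_le_mul_rpow_mul_sub hy hyx hk
    _ ≤ k * (a - v) ^ (k - 1) * M := by
        have : 0 ≤ (a - v) ^ (k - 1) := rpow_nonneg (hy.trans hyx) _
        gcongr
        linarith
    _ = k * M * (a - v) ^ (k - 1) := by ring

lemma abs_sum_mul_le_of_sum_eq_zero {ι : Type*} (t : Finset ι) {Δ g w : ι → ℝ} (c : ℝ)
    (hΔ : ∑ i ∈ t, Δ i = 0) (h : ∀ i ∈ t, |Δ i| * |g i - c| ≤ w i) :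
    |∑ i ∈ t, Δ i * g i| ≤ ∑ i ∈ t, w i := by
  have hshift : ∑ i ∈ t, Δ i * g i = ∑ i ∈ t, Δ i * (g i - c) := by
    simp only [mul_sub, sum_sub_distrib, ← sum_mul, hΔ, zero_mul, sub_zero]
  rw [hshift]
  refine (abs_sum_le_sum_abs _ _).trans (sum_le_sum fun i hi => ?_)
  rw [abs_mul]
  exact h i hi

lemma abs_le_sSup_abs_div_mul {S : Type*} [Finite S] {p Δ : S → ℝ} (hp0 : ∀ s, 0 ≤ p s)
    (hΔac : ∀ s, p s = 0 → Δ s = 0) (s : S) :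
    |Δ s| ≤ sSup ((fun s => |Δ s / p s|) '' {s | 0 < p s}) * p s := by
  rcases (hp0 s).eq_or_lt with h | h
  · simp [hΔac s h.symm, ← h]
  · rw [← div_le_iff₀ h, ← abs_of_pos h, ← abs_div]
    exact le_csSup (toFinite _).bddAbove (mem_image_of_mem _ h)

lemma one_div_mul_div_le_two_mul {k N D M Z : ℝ} (hk : 0 < k) (hD : 0 ≤ D) (hM : 0 ≤ M)
    (hZ : 0 ≤ Z) (hN : N ≤ k * D * M * Z) : 1 / k * N / Z ≤ 2 * D * M := by
  rcases hZ.eq_or_lt with hZ0 | hZpos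
  · rw [← hZ0, div_zero]
    positivity
  rw [div_le_iff₀ hZpos]
  calc 1 / k * N ≤ 1 / k * (k * D * M * Z) := by gcongr
    _ = D * M * Z := by field_simp
    _ ≤ 2 * D * M * Z := by linarith [mul_nonneg (mul_nonneg hD hM) hZ]

theorem stmt_13_general {S : Type*} [Fintype S] (p Δ V : S → ℝ) (kstar : ℝ)
    (hp0 : ∀ s, 0 ≤ p s)
    (hΔsum : ∑ s, Δ s = 0) (hΔac : ∀ s, p s = 0 → Δ s = 0)
    (hk : 1 < kstar)
    (hV0 : ∀ s, 0 ≤ V s) :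
    ∀ α : ℝ, sSup (V '' {s | 0 < p s}) ≤ α →
      (1 / kstar) * |∑ s, Δ s * (α - V s) ^ kstar| /
          (∑ s, p s * (α - V s) ^ (kstar - 1)) ≤
        2 * sSup ((fun s => |Δ s / p s|) '' {s | 0 < p s}) *
          sSup (V '' {s | 0 < p s}) := by
  intro α hα
  set M := sSup (V '' {s | 0 < p s})
  set D := sSup ((fun s => |Δ s / p s|) '' {s | 0 < p s})
  set Z := ∑ s, p s * (α - V s) ^ (kstar - 1)
  have hM0 : 0 ≤ M := sSup_nonneg (by rintro _ ⟨s, -, rfl⟩; exact hV0 s)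
  have hD0 : 0 ≤ D := sSup_nonneg (by rintro _ ⟨s, -, rfl⟩; exact abs_nonneg _)
  have hVM : ∀ s, 0 < p s → V s ≤ M := fun s h =>
    le_csSup (toFinite _).bddAbove (mem_image_of_mem _ h)
  have hterm : ∀ s, |Δ s| * |(α - V s) ^ kstar - (α - M) ^ kstar| ≤
      kstar * D * M * (p s * (α - V s) ^ (kstar - 1)) := by
    intro s
    rcases (hp0 s).eq_or_lt with h | h
    · simp [hΔac s h.symm, ← h]
    · calc _ ≤ D * p s * (kstar * M * (α - V s) ^ (kstar - 1)) :=
            mul_le_mul (abs_le_sSup_abs_div_mul hp0 hΔac s)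
              (abs_rpow_sub_rpow_sub_le (hV0 s) (hVM s h) hα hk.le) (abs_nonneg _) (by positivity)
        _ = _ := by ring
  have hnum : |∑ s, Δ s * (α - V s) ^ kstar| ≤ kstar * D * M * Z := by
    rw [mul_sum]
    exact abs_sum_mul_le_of_sum_eq_zero _ _ hΔsum fun s _ => hterm s
  have hZ : 0 ≤ Z := sum_nonneg fun s _ => by
    rcases (hp0 s).eq_or_lt with h | h
    · simp [← h]
    · have : 0 ≤ α - V s := by linarith [hVM s h]
      positivity
  exact one_div_mul_div_le_two_mul (by linarith) hD0 hM0 hZ hnum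

/-- Sensitivity bound for the `f_k`-dual functional: for `α ≥ ‖V‖_{L^∞(p)}`,
`(1/k*)·|⟨Δ, (α-V)^{k*}⟩|/⟨p, (α-V)^{k*-1}⟩ ≤ 2·‖Δ/p‖_{L^∞(p)}·‖V‖_{L^∞(p)}`. -/
theorem stmt_13 {S : Type*} [Fintype S] (p Δ V : S → ℝ) (kstar : ℝ)
    (hp0 : ∀ s, 0 ≤ p s) (hp1 : ∑ s, p s = 1)
    (hΔsum : ∑ s, Δ s = 0) (hΔac : ∀ s, p s = 0 → Δ s = 0)
    (hk : 1 < kstar)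
    (hV0 : ∀ s, 0 ≤ V s)
    (hVmin : sInf (V '' {s | 0 < p s}) = 0) :
    ∀ α : ℝ, sSup (V '' {s | 0 < p s}) ≤ α →
      (1 / kstar) * |∑ s, Δ s * (α - V s) ^ kstar| /
          (∑ s, p s * (α - V s) ^ (kstar - 1)) ≤
        2 * sSup ((fun s => |Δ s / p s|) '' {s | 0 < p s}) *
          sSup (V '' {s | 0 < p s}) :=
  stmt_13_general p Δ V kstar hp0 hΔsum hΔac hk hV0
end

section
/- Consider the two-state Markov transition matrix P_p = [[1-p, p],[p, 1-p]] with parameter p ∈ (0, 1/2]. Then for every positive integer m, P_p^m = (1-(1-2p)^m)·(1/2)·J + (1-2p)^m·I, where J is the all-ones 2×2 matrix and I the identity; consequently P_p satisfies the (m, 1-(1-2p)^m)-Doeblin condition with uniform minorization measure, and its minorization time equals inf_{m≥1} m/(1-(1-2p)^m) = 1/(2p). -/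
lemma bern_aux (r : ℝ) (hr0 : 0 ≤ r) (hr1 : r ≤ 1) : ∀ m : ℕ, 1 - r ^ m ≤ m * (1 - r) := by
  intro m
  induction m with
  | zero => simp
  | succ n ih =>
    have hrn : r ^ n ≤ 1 := pow_le_one₀ hr0 hr1
    have hrn0 : 0 ≤ r ^ n := pow_nonneg hr0 n
    push_cast
    rw [pow_succ]
    nlinarith

/-- For the two-state kernel `P_p = [[1-p, p],[p, 1-p]]` with `p ∈ (0,1/2]`:
the matrix-power formula `P_p^m = (1-(1-2p)^m)·(1/2)·J + (1-2p)^m·I`, the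
`(m, 1-(1-2p)^m)`-Doeblin condition with uniform minorization measure, and the
minorization time `inf_{m≥1} m/(1-(1-2p)^m) = 1/(2p)`, which is also the full
minorization time over all `(m,q,ψ)`. -/
theorem stmt_14 (p : ℝ) (hp : p ∈ Set.Ioc (0:ℝ) (1/2))
    (P : Matrix (Fin 2) (Fin 2) ℝ)
    (hP : P = Matrix.of ![![1 - p, p], ![p, 1 - p]]) :
    (∀ m : ℕ, P ^ m = ((1 - (1 - 2*p) ^ m) * (1/2)) • (Matrix.of fun _ _ => (1:ℝ))
        + ((1 - 2*p) ^ m) • (1 : Matrix (Fin 2) (Fin 2) ℝ)) ∧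
    (∀ m : ℕ, 1 ≤ m → ∀ s s', (P ^ m) s s' ≥ (1 - (1 - 2*p) ^ m) * (1/2)) ∧
    sInf {x : ℝ | ∃ m : ℕ, 1 ≤ m ∧ x = (m : ℝ) / (1 - (1 - 2*p) ^ m)} = 1 / (2*p) ∧
    sInf {x : ℝ | ∃ (m : ℕ) (q : ℝ) (ψ : Fin 2 → ℝ),
        1 ≤ m ∧ 0 < q ∧ (∀ s, 0 ≤ ψ s) ∧ ∑ s, ψ s = 1 ∧
        (∀ s s', q * ψ s' ≤ (P ^ m) s s') ∧ x = (m : ℝ) / q} = 1 / (2*p) := by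
  obtain ⟨hp0, hp2⟩ := hp
  set r : ℝ := 1 - 2*p with hr
  have hr0 : 0 ≤ r := by simp [hr]; linarith
  have hr1 : r < 1 := by simp [hr]; linarith
  -- power formula
  have hpow : ∀ m : ℕ, P ^ m = ((1 - r ^ m) * (1/2)) • (Matrix.of fun _ _ => (1:ℝ))
      + (r ^ m) • (1 : Matrix (Fin 2) (Fin 2) ℝ) := by
    intro m
    induction m with
    | zero => simp
    | succ n ih =>
      rw [pow_succ, ih, hP]
      ext i j
      fin_cases i <;> fin_cases j <;>
        simp [Matrix.mul_apply, Fin.sum_univ_two, Matrix.add_apply, Matrix.smul_apply,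
          Matrix.one_apply, pow_succ, hr] <;> ring
  -- entrywise lower bound
  have hent : ∀ m : ℕ, ∀ s s' : Fin 2, (P ^ m) s s' ≥ (1 - r ^ m) * (1/2) := by
    intro m s s'
    rw [hpow m]
    have : (0:ℝ) ≤ r ^ m := pow_nonneg hr0 m
    simp only [Matrix.add_apply, Matrix.smul_apply, Matrix.of_apply, smul_eq_mul, mul_one,
      Matrix.one_apply]
    split <;> nlinarith
  refine ⟨hpow, fun m _ s s' => hent m s s', ?_, ?_⟩
  -- third part
  · have hmem : (1 / (2*p)) ∈ {x : ℝ | ∃ m : ℕ, 1 ≤ m ∧ x = (m : ℝ) / (1 - r ^ m)} := by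
      refine ⟨1, le_refl 1, ?_⟩
      simp [hr]
    have hlb : ∀ x ∈ {x : ℝ | ∃ m : ℕ, 1 ≤ m ∧ x = (m : ℝ) / (1 - r ^ m)}, 1/(2*p) ≤ x := by
      rintro x ⟨m, hm, rfl⟩
      have hb := bern_aux r hr0 hr1.le m
      have hrm : r ^ m < 1 := by
        calc r ^ m ≤ r ^ 1 := pow_le_pow_of_le_one hr0 hr1.le hm
        _ = r := pow_one r
        _ < 1 := hr1
      have hm1 : (1:ℝ) ≤ (m:ℝ) := by exact_mod_cast hm
      rw [div_le_div_iff₀ (by linarith) (by linarith)]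
      have : (1:ℝ) - r = 2*p := by simp [hr]
      nlinarith
    exact le_antisymm (csInf_le ⟨_, hlb⟩ hmem) (le_csInf ⟨_, hmem⟩ hlb)
  -- fourth part
  · set S := {x : ℝ | ∃ (m : ℕ) (q : ℝ) (ψ : Fin 2 → ℝ),
        1 ≤ m ∧ 0 < q ∧ (∀ s, 0 ≤ ψ s) ∧ ∑ s, ψ s = 1 ∧
        (∀ s s', q * ψ s' ≤ (P ^ m) s s') ∧ x = (m : ℝ) / q} with hS
    have hmem : (1/(2*p)) ∈ S := by
      refine ⟨1, 2*p, fun _ => 1/2, le_refl 1, by linarith, fun _ => by norm_num,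
        by simp [Fin.sum_univ_two], ?_, by norm_num⟩
      intro s s'
      have h1 : 2*p*(1/2) = p := by ring
      rw [pow_one, hP, h1]
      fin_cases s <;> fin_cases s' <;> simp <;> linarith
    have hlb : ∀ x ∈ S, 1/(2*p) ≤ x := by
      rintro x ⟨m, q, ψ, hm, hq, hψ0, hψ1, hmin, rfl⟩
      have hb := bern_aux r hr0 hr1.le m
      have hm1 : (1:ℝ) ≤ (m:ℝ) := by exact_mod_cast hm
      -- some ψ s' ≥ 1/2; use opposite s to get off-diagonal entry
      have hsum : ψ 0 + ψ 1 = 1 := by simpa [Fin.sum_univ_two] using hψ1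
      have key : q ≤ 1 - r ^ m := by
        rcases le_or_gt (1/2 : ℝ) (ψ 0) with h | h
        · have := hmin 1 0
          rw [hpow m] at this
          simp only [Matrix.add_apply, Matrix.smul_apply, Matrix.of_apply, smul_eq_mul, mul_one,
            Matrix.one_apply] at this
          norm_num at this
          nlinarith
        · have hψ1' : (1/2 : ℝ) ≤ ψ 1 := by linarith
          have := hmin 0 1
          rw [hpow m] at this
          simp only [Matrix.add_apply, Matrix.smul_apply, Matrix.of_apply, smul_eq_mul, mul_one,
            Matrix.one_apply] at this
          norm_num at this
          nlinarith
      rw [div_le_div_iff₀ (by linarith) hq]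
      have h2p : (1:ℝ) - r = 2*p := by simp [hr]
      nlinarith
    exact le_antisymm (csInf_le ⟨_, hlb⟩ hmem) (le_csInf ⟨_, hmem⟩ hlb)
end

section
/- Let S, A be finite, r : S×A → [0,1], ξ ∈ (0,1), s₀ ∈ S, and for each (s,a) let P_{s,a} be a nonempty compact set of probability measures on S. Define the anchored uncertainty sets P̲_{s,a} = {(1-ξ)p + ξ·δ_{s₀} : p ∈ P_{s,a}}. Suppose V* : S → ℝ satisfies the discounted robust Bellman equation V*(s) = max_a {r(s,a) + (1-ξ)·Γ_{P_{s,a}}(V*)} for all s. Then the pair (g, v) = (ξ·V*(s₀), V*) solves the anchored average-reward robust Bellman equation v(s) = max_a {r(s,a) + Γ_{P̲_{s,a}}(v)} - g for all s. -/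
/-- The robust expectation functional `Γ_P(V) = inf_{p∈P} Σ_s p(s)V(s)`. -/
noncomputable def Gamma {S : Type*} [Fintype S] (P : Set (S → ℝ)) (V : S → ℝ) : ℝ :=
  sInf ((fun p => ∑ s, p s * V s) '' P)

lemma sInf_affine_image (A : Set ℝ) (hA : A.Nonempty) (hbdd : BddBelow A)
    (c d : ℝ) (hc : 0 ≤ c) :
    sInf ((fun x => c * x + d) '' A) = c * sInf A + d := by
  have hmono : Monotone (fun x => c * x + d) := by
    intro x y hxy
    simpa using add_le_add_right (mul_le_mul_of_nonneg_left hxy hc) d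
  exact (hmono.map_csInf_of_continuousAt (by fun_prop) hA hbdd).symm

/-- If `V*` solves the discounted robust Bellman equation with discount `1-ξ`,
then `(ξ·V*(s₀), V*)` solves the anchored average-reward robust Bellman equation,
where the anchored uncertainty sets are `{(1-ξ)p + ξ·δ_{s₀} : p ∈ P_{s,a}}`. -/
theorem stmt_15 {S A : Type*} [Fintype S] [DecidableEq S] [Fintype A] [Nonempty A]
    (r : S → A → ℝ) (hr : ∀ s a, r s a ∈ Set.Icc (0:ℝ) 1)
    (ξ : ℝ) (hξ : ξ ∈ Set.Ioo (0:ℝ) 1) (s₀ : S)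
    (P : S → A → Set (S → ℝ))
    (hP : ∀ s a, (P s a).Nonempty ∧ IsCompact (P s a) ∧
      ∀ p ∈ P s a, (∀ s', 0 ≤ p s') ∧ ∑ s', p s' = 1)
    (Vstar : S → ℝ)
    (hV : ∀ s, Vstar s = Finset.univ.sup' Finset.univ_nonempty
      (fun a => r s a + (1 - ξ) * Gamma (P s a) Vstar)) :
    ∀ s, Vstar s = Finset.univ.sup' Finset.univ_nonempty
      (fun a => r s a + Gamma
        ((fun q => fun s' => (1 - ξ) * q s' + ξ * (if s' = s₀ then 1 else 0)) '' P s a)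
        Vstar) - ξ * Vstar s₀ := by
  have hSne : Nonempty S := ⟨s₀⟩
  -- lower bound for Vstar values
  have key : ∀ s a, Gamma
      ((fun q => fun s' => (1 - ξ) * q s' + ξ * (if s' = s₀ then 1 else 0)) '' P s a)
      Vstar = (1 - ξ) * Gamma (P s a) Vstar + ξ * Vstar s₀ := by
    intro s a
    obtain ⟨hne, hcpt, hprob⟩ := hP s a
    -- the image of the sum map
    have himg : ((fun p => ∑ s', p s' * Vstar s') ''
        ((fun q => fun s' => (1 - ξ) * q s' + ξ * (if s' = s₀ then 1 else 0)) '' P s a))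
        = (fun x => (1 - ξ) * x + ξ * Vstar s₀) ''
          ((fun p => ∑ s', p s' * Vstar s') '' P s a) := by
      rw [← Set.image_comp, ← Set.image_comp]
      apply Set.image_congr
      intro p _
      simp only [Function.comp]
      rw [show (∑ x : S, ((1 - ξ) * p x + ξ * if x = s₀ then 1 else 0) * Vstar x)
          = ∑ x : S, ((1 - ξ) * (p x * Vstar x) + if x = s₀ then ξ * Vstar x else 0) from
        Finset.sum_congr rfl (fun x _ => by by_cases h : x = s₀ <;> simp [h] <;> ring),
        Finset.sum_add_distrib, ← Finset.mul_sum]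
      have : ∑ x : S, (if x = s₀ then ξ * Vstar x else 0) = ξ * Vstar s₀ := by
        rw [Finset.sum_ite_eq' Finset.univ s₀ (fun x => ξ * Vstar x)]
        simp
      rw [this]
    have hAne : ((fun p => ∑ s', p s' * Vstar s') '' P s a).Nonempty := hne.image _
    have hbdd : BddBelow ((fun p => ∑ s', p s' * Vstar s') '' P s a) := by
      refine ⟨-(∑ s' : S, |Vstar s'|), ?_⟩
      rintro x ⟨p, hp, rfl⟩
      obtain ⟨hpos, hsum⟩ := hprob p hp
      have hple : ∀ s', p s' ≤ 1 := by
        intro s'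
        calc p s' ≤ ∑ t, p t := Finset.single_le_sum (fun t _ => hpos t) (Finset.mem_univ s')
        _ = 1 := hsum
      rw [← Finset.sum_neg_distrib]
      apply Finset.sum_le_sum
      intro i _
      rcases le_or_gt 0 (Vstar i) with h | h
      · nlinarith [hpos i, hple i, abs_nonneg (Vstar i), neg_abs_le (Vstar i)]
      · nlinarith [hpos i, hple i, neg_abs_le (Vstar i)]
    unfold Gamma
    rw [himg, sInf_affine_image _ hAne hbdd _ _ (by linarith [hξ.2])]
  intro s
  have := hV s
  rw [this]
  rw [eq_sub_iff_add_eq]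
  rw [Finset.sup'_add]
  apply Finset.sup'_congr _ rfl
  intro a _
  rw [key s a]
  ring
end
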